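/- For n = 3, the operators A_{11}^± and A_{2i}^∓ with opposite superscripts commute: [A_{11}⁺, A_{21}⁻] = 0, [A_{11}⁺, A_{22}⁻] = 0, [A_{11}⁻, A_{21}⁺] = 0 and [A_{11}⁻, A_{22}⁺] = 0 in End_ℂ(L). -/

import Mathlib

open scoped BigOperators
open MvPolynomial

noncomputable section

/-- The polynomial ring `Λ = ℂ[x_{ki}]` (variables indexed by pairs `(k, i)`). -/
abbrev Lam : Type := MvPolynomial (ℕ × ℕ) ℂ

/-- `L`, the field of fractions of `Λ`. -/
abbrev L : Type := FractionRing Lam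

/-- The variable `x_{ki}` as an element of `L`. -/
def x (k i : ℕ) : L := algebraMap Lam L (X (k, i))

/-- The algebra automorphism of `Λ` sending `x_v ↦ x_v - 1` and fixing the other variables. -/
def shiftEquiv (v : ℕ × ℕ) : Lam ≃ₐ[ℂ] Lam :=
  AlgEquiv.ofAlgHom
    (aeval (fun w => if w = v then X w - 1 else X w))
    (aeval (fun w => if w = v then X w + 1 else X w))
    (by apply MvPolynomial.algHom_ext; intro w; by_cases h : w = v <;> simp [h])
    (by apply MvPolynomial.algHom_ext; intro w; by_cases h : w = v <;> simp [h])

/-- The automorphism `δ^{ki}` of `L`, determined by `δ^{ki}(x_{ℓj}) = x_{ℓj} - δ_{ℓk}δ_{ij}`. -/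
def δ (k i : ℕ) : L ≃ₐ[ℂ] L := IsFractionRing.algEquivOfAlgEquiv (shiftEquiv (k, i))

/-- Multiplication by `a ∈ L` as a `ℂ`-linear endomorphism `m_a` of `L`. -/
def mulOp (a : L) : Module.End ℂ L := LinearMap.mulLeft ℂ a

/-- A field automorphism of `L` as a `ℂ`-linear endomorphism of `L`. -/
def lin (e : L ≃ₐ[ℂ] L) : Module.End ℂ L := e.toLinearMap

/-- The rational function `a_{ki}^+`. -/
def aP (k i : ℕ) : L :=
  -((∏ j ∈ Finset.Icc 1 (k + 1), (x (k + 1) j - x k i)) /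
    ∏ j ∈ (Finset.Icc 1 k).erase i, (x k j - x k i))

/-- The rational function `a_{ki}^-`. -/
def aM (k i : ℕ) : L :=
  (∏ j ∈ Finset.Icc 1 (k - 1), (x (k - 1) j - x k i)) /
    ∏ j ∈ (Finset.Icc 1 k).erase i, (x k j - x k i)

/-- The operator `A_{ki}^+ = δ^{ki} ∘ m_{a_{ki}^+}`. -/
def Ap (k i : ℕ) : Module.End ℂ L := lin (δ k i) * mulOp (aP k i)

/-- The operator `A_{ki}^- = (δ^{ki})^{-1} ∘ m_{a_{ki}^-}`. -/
def Am (k i : ℕ) : Module.End ℂ L := lin (δ k i).symm * mulOp (aM k i)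

/-- The operator `X_k^+ = ∑_{i=1}^k A_{ki}^+`. -/
def Xp (k : ℕ) : Module.End ℂ L := ∑ i ∈ Finset.Icc 1 k, Ap k i

/-- The operator `X_k^- = ∑_{i=1}^k A_{ki}^-`. -/
def Xm (k : ℕ) : Module.End ℂ L := ∑ i ∈ Finset.Icc 1 k, Am k i

/-- The operator `X_{kk}`. -/
def Xd (k : ℕ) : Module.End ℂ L :=
  mulOp ((∑ j ∈ Finset.Icc 1 k, (x k j + (j : L) - 1)) -
    ∑ i ∈ Finset.Icc 1 (k - 1), (x (k - 1) i + (i : L) - 1))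

/-- The Vandermonde polynomial `∏_{1 ≤ i < j ≤ k} (x_{ki} - x_{kj})`, as an element of `L`. -/
def vand (k : ℕ) : L :=
  ∏ p ∈ (Finset.Icc 1 k ×ˢ Finset.Icc 1 k).filter (fun p => p.1 < p.2),
    (x k p.1 - x k p.2)

/-- The operator `𝒱_k = m_{∏_{i<j}(x_{ki} - x_{kj})}`. -/
def Vop (k : ℕ) : Module.End ℂ L := mulOp (vand k)

/-- The generating set of `U_n`: the `X_k^±` for `1 ≤ k ≤ n-1` and the `X_{kk}` for `1 ≤ k ≤ n`. -/
def Ugens (n : ℕ) : Set (Module.End ℂ L) :=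
  {u | ∃ k, 1 ≤ k ∧ k + 1 ≤ n ∧ (u = Xp k ∨ u = Xm k)} ∪
    {u | ∃ k, 1 ≤ k ∧ k ≤ n ∧ u = Xd k}

/-- `U_n`, the Gelfand–Tsetlin realization of `U(gl_n)` inside `End_ℂ(L)`. -/
def Ualg (n : ℕ) : Subalgebra ℂ (Module.End ℂ L) := Algebra.adjoin ℂ (Ugens n)

/-- `𝒜(gl_n)`, the subalgebra generated by `U_n` together with `𝒱_2, …, 𝒱_n`. -/
def Agl (n : ℕ) : Subalgebra ℂ (Module.End ℂ L) :=
  Algebra.adjoin ℂ (Ugens n ∪ {u | ∃ k, 2 ≤ k ∧ k ≤ n ∧ u = Vop k})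

/-! Every `A_{ki}^±` has the shape `e ∘ m_a` with `e` a shift automorphism, and
`(e ∘ m_a)(f ∘ m_b) = (e f) ∘ m_{f⁻¹(a) b}`. Since all shifts commute, `e ∘ m_a` and `f ∘ m_b`
commute once `f⁻¹(a) · b = e⁻¹(b) · a`. For `A_{11}^-` and `A_{2i}^+` this holds because
`a_{11}^- = 1` and `a_{2i}^+` does not involve `x_{11}`. For `A_{11}^+` and `A_{2i}^-`, the shift
`δ^{2i}` changes the factor `x_{2i} - x_{11}` of `a_{11}^+` and `(δ^{11})^{-1}` the factor
`x_{11} - x_{2i}` of `a_{2i}^-` by the same ratio `(x_{2i} - x_{11} - 1)/(x_{2i} - x_{11})`. -/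

theorem Commute.algEquiv_mul_mulLeft {R A : Type*} [CommSemiring R] [CommSemiring A]
    [Algebra R A] {e f : A ≃ₐ[R] A} (hef : Commute e f) {a b : A}
    (h : f.symm a * b = e.symm b * a) :
    Commute (e.toLinearMap * LinearMap.mulLeft R a) (f.toLinearMap * LinearMap.mulLeft R b) := by
  ext y
  simp only [Module.End.mul_apply, AlgEquiv.toLinearMap_apply, LinearMap.mulLeft_apply]
  calc e (a * f (b * y))
      = (e * f) ((f.symm a * b) * y) := by simp [map_mul, mul_assoc]
    _ = (f * e) ((e.symm b * a) * y) := by rw [h, hef.eq]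
    _ = f (b * e (a * y)) := by simp [map_mul, mul_assoc]

theorem IsFractionRing.algEquivOfAlgEquiv_commute {R A K : Type*} [CommSemiring R] [CommRing A]
    [Field K] [Algebra R A] [Algebra R K] [Algebra A K] [IsFractionRing A K]
    [IsScalarTower R A K] {e f : A ≃ₐ[R] A} (hef : Commute e f) :
    Commute (algEquivOfAlgEquiv e : K ≃ₐ[R] K) (algEquivOfAlgEquiv f) := by
  ext z
  obtain ⟨p, q, -, rfl⟩ := IsFractionRing.div_surjective (A := A) z
  simp only [AlgEquiv.mul_apply, map_div₀, algEquivOfAlgEquiv_algebraMap]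
  simp only [← AlgEquiv.mul_apply, hef.eq]

theorem shiftEquiv_commute (v w : ℕ × ℕ) : Commute (shiftEquiv v) (shiftEquiv w) := by
  refine AlgEquiv.coe_toAlgHom_injective (MvPolynomial.algHom_ext fun u => ?_)
  simp only [AlgEquiv.coe_toAlgHom, AlgEquiv.mul_apply]
  rcases eq_or_ne u v with rfl | hv <;> rcases eq_or_ne u w with rfl | hw <;>
    simp [shiftEquiv, *, Ne.symm, sub_sub]

theorem δ_commute (k i l j : ℕ) : Commute (δ k i) (δ l j) :=
  IsFractionRing.algEquivOfAlgEquiv_commute (shiftEquiv_commute _ _)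

theorem δ_x (k i l j : ℕ) :
    δ k i (x l j) = if (l, j) = (k, i) then x l j - 1 else x l j := by
  by_cases h : (l, j) = (k, i) <;> simp [δ, x, shiftEquiv, h]

theorem δ_symm_x (k i l j : ℕ) :
    (δ k i).symm (x l j) = if (l, j) = (k, i) then x l j + 1 else x l j := by
  rw [AlgEquiv.symm_apply_eq]
  split_ifs with h <;> simp [δ_x, h]

theorem Ap_commute_Am {k i l j : ℕ}
    (h : δ l j (aP k i) * aM l j = (δ k i).symm (aM l j) * aP k i) :
    Commute (Ap k i) (Am l j) :=
  (δ_commute k i l j).inv_right.algEquiv_mul_mulLeft (by simpa [AlgEquiv.aut_inv] using h)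

theorem Am_commute_Ap {k i l j : ℕ}
    (h : (δ l j).symm (aM k i) * aP l j = δ k i (aP l j) * aM k i) :
    Commute (Am k i) (Ap l j) :=
  (δ_commute k i l j).inv_left.algEquiv_mul_mulLeft (by simpa [AlgEquiv.aut_inv] using h)

theorem δ_one_one_aP_two (i : ℕ) : δ 1 1 (aP 2 i) = aP 2 i := by
  simp [aP, map_prod, δ_x]

theorem aP_one_one : aP 1 1 = -((x 2 1 - x 1 1) * (x 2 2 - x 1 1)) := by
  simp [aP, Finset.prod_Icc_succ_top]

theorem aM_one_one : aM 1 1 = 1 := by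
  simp [aM]

theorem aM_two_one : aM 2 1 = (x 1 1 - x 2 1) / (x 2 2 - x 2 1) := by
  simp [aM]

theorem aM_two_two : aM 2 2 = (x 1 1 - x 2 2) / (x 2 1 - x 2 2) := by
  simp [aM]

theorem Ap_one_one_commute_Am_two_one : Commute (Ap 1 1) (Am 2 1) :=
  Ap_commute_Am (by rw [aP_one_one, aM_two_one]; simp [δ_x, δ_symm_x]; ring)

theorem Ap_one_one_commute_Am_two_two : Commute (Ap 1 1) (Am 2 2) :=
  Ap_commute_Am (by rw [aP_one_one, aM_two_two]; simp [δ_x, δ_symm_x]; ring)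

theorem Am_one_one_commute_Ap_two (i : ℕ) : Commute (Am 1 1) (Ap 2 i) :=
  Am_commute_Ap (by simp [aM_one_one, δ_one_one_aP_two])

/-- `[A_{11}⁺, A_{21}⁻] = [A_{11}⁺, A_{22}⁻] = [A_{11}⁻, A_{21}⁺]
= [A_{11}⁻, A_{22}⁺] = 0`. -/
theorem A11_A2i_opposite_signs_commute :
    Ap 1 1 * Am 2 1 - Am 2 1 * Ap 1 1 = 0 ∧
    Ap 1 1 * Am 2 2 - Am 2 2 * Ap 1 1 = 0 ∧
    Am 1 1 * Ap 2 1 - Ap 2 1 * Am 1 1 = 0 ∧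
    Am 1 1 * Ap 2 2 - Ap 2 2 * Am 1 1 = 0 :=
  ⟨sub_eq_zero.mpr Ap_one_one_commute_Am_two_one.eq,
    sub_eq_zero.mpr Ap_one_one_commute_Am_two_two.eq,
    sub_eq_zero.mpr (Am_one_one_commute_Ap_two 1).eq,
    sub_eq_zero.mpr (Am_one_one_commute_Ap_two 2).eq⟩
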